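/- For z in the upper half-plane with |z - 1/2| = 1/2 (apex of a right triangle with hypotenuse [0,1]), the Apollonius ratio α = |z-ρ|/|z-ρ⁻¹| satisfies α ≥ (√3-1)²/2, with equality exactly when z = 1/2 + i/2 (the right isosceles triangle); here ρ = exp(πi/3). -/

import Mathlib

/-!
On the Thales circle `‖z - 1/2‖ = 1/2` one has `‖z‖² = Re z`, and since `ρ` and `ρ⁻¹ = conj ρ`
are unit vectors with real part `1/2`, this turns the squared distances into
`‖z - ρ‖² = 1 - √3 Im z` and `‖z - ρ⁻¹‖² = 1 + √3 Im z`. With `c = 2 - √3 = (√3 - 1)² / 2`,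
`‖z - ρ‖² - c² ‖z - ρ⁻¹‖² = (4√3 - 6)(1 - 2 Im z)`, which is nonnegative because `Im z ≤ 1/2`
on the circle, and vanishes only at the top point `1/2 + i/2`.
-/

open Complex ComplexConjugate Real

noncomputable def ρ : ℂ := Complex.exp (Real.pi * Complex.I / 3)

namespace Complex

theorem normSq_eq_re_of_norm_sub_half {z : ℂ} (hz : ‖z - 1 / 2‖ = 1 / 2) : normSq z = z.re := by
  have h := congrArg (· ^ 2) hz
  simp only [Complex.sq_norm, normSq_apply, sub_re, sub_im] at h
  norm_num at h
  rw [normSq_apply]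
  linarith

theorem im_le_half_of_norm_sub_half {z : ℂ} (hz : ‖z - 1 / 2‖ = 1 / 2) : z.im ≤ 1 / 2 := by
  have h := normSq_eq_re_of_norm_sub_half hz
  rw [normSq_apply] at h
  nlinarith [sq_nonneg (z.re - 1 / 2), sq_nonneg (z.im - 1 / 2)]

theorem im_eq_half_iff_of_norm_sub_half {z : ℂ} (hz : ‖z - 1 / 2‖ = 1 / 2) :
    z.im = 1 / 2 ↔ z = 1 / 2 + I / 2 := by
  constructor
  · intro him
    have h := normSq_eq_re_of_norm_sub_half hz
    rw [normSq_apply, him] at h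
    have hre : z.re = 1 / 2 := by nlinarith [sq_nonneg (z.re - 1 / 2)]
    apply Complex.ext <;> simp [hre, him]
  · rintro rfl
    simp

theorem sq_norm_sub_of_norm_eq_one (z : ℂ) {w : ℂ} (hw : ‖w‖ = 1) :
    ‖z - w‖ ^ 2 = normSq z + 1 - 2 * (z.re * w.re + z.im * w.im) := by
  rw [Complex.sq_norm, normSq_sub, normSq_eq_norm_sq w, hw]
  simp

end Complex

theorem ρ_eq_exp_ofReal_mul_I : ρ = exp ((π / 3 : ℝ) * I) := by
  rw [ρ]
  push_cast
  ring_nf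

theorem norm_ρ : ‖ρ‖ = 1 := by
  rw [ρ_eq_exp_ofReal_mul_I, norm_exp_ofReal_mul_I]

theorem ρ_re : ρ.re = 1 / 2 := by
  simp [ρ_eq_exp_ofReal_mul_I, exp_re]

theorem ρ_im : ρ.im = √3 / 2 := by
  simp [ρ_eq_exp_ofReal_mul_I, exp_im]

theorem ρ_inv : ρ⁻¹ = conj ρ := inv_eq_conj norm_ρ

theorem sq_norm_sub_ρ_of_norm_sub_half {z : ℂ} (hz : ‖z - 1 / 2‖ = 1 / 2) :
    ‖z - ρ‖ ^ 2 = 1 - √3 * z.im := by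
  rw [sq_norm_sub_of_norm_eq_one z norm_ρ, normSq_eq_re_of_norm_sub_half hz, ρ_re, ρ_im]
  ring

theorem sq_norm_sub_ρ_inv_of_norm_sub_half {z : ℂ} (hz : ‖z - 1 / 2‖ = 1 / 2) :
    ‖z - ρ⁻¹‖ ^ 2 = 1 + √3 * z.im := by
  rw [ρ_inv, sq_norm_sub_of_norm_eq_one z (by rw [norm_conj, norm_ρ]),
    normSq_eq_re_of_norm_sub_half hz, conj_re, conj_im, ρ_re, ρ_im]
  ring

theorem sq_norm_sub_ρ_sub_sq_norm_sub_ρ_inv {z : ℂ} (hz : ‖z - 1 / 2‖ = 1 / 2) :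
    ‖z - ρ‖ ^ 2 - ((2 - √3) * ‖z - ρ⁻¹‖) ^ 2 = (4 * √3 - 6) * (1 - 2 * z.im) := by
  have h3 : √3 ^ 2 = 3 := sq_sqrt (by norm_num)
  rw [mul_pow, sq_norm_sub_ρ_of_norm_sub_half hz, sq_norm_sub_ρ_inv_of_norm_sub_half hz]
  linear_combination (4 * z.im - 1 - √3 * z.im) * h3

theorem stmt17 (z : ℂ) (hzim : 0 < z.im) (hz : ‖z - 1 / 2‖ = 1 / 2) :
    (Real.sqrt 3 - 1) ^ 2 / 2 ≤ ‖z - ρ‖ / ‖z - ρ⁻¹‖ ∧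
    (‖z - ρ‖ / ‖z - ρ⁻¹‖ = (Real.sqrt 3 - 1) ^ 2 / 2 ↔
      z = 1 / 2 + Complex.I / 2) := by
  have h3 : √3 ^ 2 = 3 := sq_sqrt (by norm_num)
  have hc : (√3 - 1) ^ 2 / 2 = 2 - √3 := by linear_combination h3 / 2
  have hc_nonneg : 0 ≤ 2 - √3 := by nlinarith [sqrt_nonneg 3]
  have hpos : 0 < 4 * √3 - 6 := by nlinarith [sqrt_nonneg 3]
  have hdiff := sq_norm_sub_ρ_sub_sq_norm_sub_ρ_inv hz
  have hB : 0 < ‖z - ρ⁻¹‖ := by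
    have hB2 : 0 < ‖z - ρ⁻¹‖ ^ 2 := by
      rw [sq_norm_sub_ρ_inv_of_norm_sub_half hz]
      positivity
    exact (norm_nonneg _).lt_of_ne' (sq_pos_iff.mp hB2)
  have hcB : 0 ≤ (2 - √3) * ‖z - ρ⁻¹‖ := mul_nonneg hc_nonneg (norm_nonneg _)
  rw [hc]
  constructor
  · rw [le_div_iff₀ hB, ← sq_le_sq₀ hcB (norm_nonneg _), ← sub_nonneg, hdiff]
    exact mul_nonneg hpos.le (by linarith [im_le_half_of_norm_sub_half hz])
  · rw [div_eq_iff hB.ne', ← sq_eq_sq₀ (norm_nonneg _) hcB, ← sub_eq_zero, hdiff,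
      mul_eq_zero, or_iff_right hpos.ne', ← im_eq_half_iff_of_norm_sub_half hz]
    constructor <;> intro h <;> linarith
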